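/- arXiv:1702.02937 — 7 statements merged into one kernel-verified Lean document; each statement's English description precedes it below -/
import Mathlib

section
/- Let p be a polynomial in n variables with nonnegative real coefficients and let α ∈ ℝ₊ⁿ be a point in the Newton polytope of p (the convex hull of the exponent vectors of monomials with nonzero coefficient). Then inf over z > 0 of p(z)/∏ᵢ zᵢ^(αᵢ) is strictly positive. -/
open Finset

theorem inf_pos_of_mem_newton (n : ℕ) (p : MvPolynomial (Fin n) ℝ)
    (hp : ∀ κ, 0 ≤ p.coeff κ) (α : Fin n → ℝ) (hα : ∀ i, 0 ≤ α i)
    (hmem : α ∈ convexHull ℝ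
      ((fun κ : Fin n →₀ ℕ => fun i => (κ i : ℝ)) '' ↑p.support)) :
    0 < ⨅ z : {z : Fin n → ℝ // ∀ i, 0 < z i},
        MvPolynomial.eval z.val p / ∏ i, (z.val i) ^ (α i) := by
  classical
  set φ : (Fin n →₀ ℕ) → (Fin n → ℝ) := fun κ => fun i => (κ i : ℝ) with hφ
  have himg : ((fun κ : Fin n →₀ ℕ => fun i => (κ i : ℝ)) '' ↑p.support)
      = ↑(p.support.image φ) := (Finset.coe_image).symm
  rw [himg, Finset.mem_convexHull'] at hmem
  obtain ⟨w, hw0, hw1, hsum⟩ := hmem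
  have hinj : ∀ x ∈ p.support, ∀ y ∈ p.support, φ x = φ y → x = y := by
    intro x _ y _ h
    ext i
    exact Nat.cast_injective (congrFun h i)
  set w' : (Fin n →₀ ℕ) → ℝ := fun κ => w (φ κ) with hw'
  have hw0' : ∀ κ ∈ p.support, 0 ≤ w' κ := fun κ hκ =>
    hw0 _ (Finset.mem_image_of_mem φ hκ)
  have hw1' : ∑ κ ∈ p.support, w' κ = 1 := by
    rw [Finset.sum_image hinj] at hw1; exact hw1
  have hαeq : ∀ i, α i = ∑ κ ∈ p.support, w' κ * (κ i : ℝ) := by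
    intro i
    rw [Finset.sum_image hinj] at hsum
    have h2 := congrFun hsum.symm i
    simpa [Finset.sum_apply] using h2
  -- support is nonempty
  have hne : p.support.Nonempty := by
    by_contra h
    rw [Finset.not_nonempty_iff_eq_empty] at h
    rw [h] at hw1'
    simp at hw1'
  -- the minimum coefficient
  set c : ℝ := p.support.inf' hne (fun κ => p.coeff κ) with hc
  have hcpos : 0 < c := by
    rw [hc, Finset.lt_inf'_iff]
    intro κ hκ
    exact (hp κ).lt_of_ne (Ne.symm (MvPolynomial.mem_support_iff.mp hκ))
  have hwle : ∀ κ ∈ p.support, w' κ ≤ 1 := by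
    intro κ hκ
    rw [← hw1']
    exact Finset.single_le_sum hw0' hκ
  have key : ∀ z : {z : Fin n → ℝ // ∀ i, 0 < z i},
      c ≤ MvPolynomial.eval z.val p / ∏ i, (z.val i) ^ (α i) := by
    rintro ⟨z, hz⟩
    set M : (Fin n →₀ ℕ) → ℝ := fun κ => ∏ i, z i ^ (κ i) with hM
    have hMpos : ∀ κ, 0 < M κ :=
      fun κ => Finset.prod_pos fun i _ => pow_pos (hz i) _
    have hD : (0:ℝ) < ∏ i, z i ^ (α i) :=
      Finset.prod_pos fun i _ => Real.rpow_pos_of_pos (hz i) _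
    have step1 : (∏ i, z i ^ (α i))
        = ∏ κ ∈ p.support, (M κ) ^ (w' κ) := by
      have : ∀ i : Fin n, z i ^ (α i)
          = ∏ κ ∈ p.support, (z i ^ (κ i : ℝ)) ^ (w' κ) := by
        intro i
        rw [hαeq i, Real.rpow_sum_of_pos (hz i)]
        refine Finset.prod_congr rfl fun κ _ => ?_
        rw [← Real.rpow_mul (hz i).le, mul_comm]
      rw [Finset.prod_congr rfl (fun i _ => this i), Finset.prod_comm]
      refine Finset.prod_congr rfl fun κ _ => ?_
      rw [Real.finset_prod_rpow _ _ (fun i _ => Real.rpow_nonneg (hz i).le _)]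
      congr 1
      exact Finset.prod_congr rfl fun i _ => Real.rpow_natCast _ _
    have step2 : ∏ κ ∈ p.support, (M κ) ^ (w' κ)
        ≤ ∑ κ ∈ p.support, w' κ * M κ :=
      Real.geom_mean_le_arith_mean_weighted _ _ _ hw0' hw1'
        (fun κ _ => (hMpos κ).le)
    have step3 : ∑ κ ∈ p.support, w' κ * M κ
        ≤ MvPolynomial.eval z p / c := by
      rw [MvPolynomial.eval_eq', Finset.sum_div]
      refine Finset.sum_le_sum fun κ hκ => ?_
      have h1 : c ≤ p.coeff κ := Finset.inf'_le _ hκ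
      have : w' κ ≤ p.coeff κ / c := by
        refine (hwle κ hκ).trans ?_
        rw [le_div_iff₀ hcpos, one_mul]; exact h1
      calc w' κ * M κ ≤ (p.coeff κ / c) * M κ :=
            mul_le_mul_of_nonneg_right this (hMpos κ).le
        _ = p.coeff κ * M κ / c := by ring
    have hfinal : (∏ i, z i ^ (α i)) ≤ MvPolynomial.eval z p / c :=
      (step1.le.trans step2).trans step3
    rw [le_div_iff₀ hD]
    calc c * ∏ i, z i ^ (α i) ≤ c * (MvPolynomial.eval z p / c) :=
          mul_le_mul_of_nonneg_left hfinal hcpos.le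
      _ = MvPolynomial.eval z p := by field_simp
  have hnonempty : Nonempty {z : Fin n → ℝ // ∀ i, 0 < z i} :=
    ⟨⟨fun _ => 1, fun _ => one_pos⟩⟩
  exact lt_of_lt_of_le hcpos (le_ciInf key)
end

section
/- Let p be a polynomial in n variables with nonnegative real coefficients and let α ∈ ℝ₊ⁿ be a point not in the Newton polytope of p. Then inf over z > 0 of p(z)/∏ᵢ zᵢ^(αᵢ) equals 0. -/
/-!
Separate `α` from the Newton polytope by a linear functional `c`, so that `κ ⬝ᵥ c < α ⬝ᵥ c` for
every exponent `κ` of `p`. Along the curve `z(t) = exp (t • c)` every monomial becomes an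
exponential, and `p(z) / z^α = ∑ κ, p_κ exp (t (κ ⬝ᵥ c - α ⬝ᵥ c))` tends to `0` as `t → ∞`.
Since the ratio is nonnegative, its infimum is `0`.
-/

open Filter Topology Finset Real MvPolynomial Matrix

lemma Real.iInf_eq_zero_of_tendsto {ι β : Type*} {f : ι → ℝ} (hf : ∀ i, 0 ≤ f i)
    {l : Filter β} [l.NeBot] {g : β → ι} (h : Tendsto (f ∘ g) l (𝓝 0)) : ⨅ i, f i = 0 :=
  le_antisymm
    (ge_of_tendsto h <| Eventually.of_forall fun b =>
      ciInf_le ⟨0, Set.forall_mem_range.2 hf⟩ (g b))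
    (Real.iInf_nonneg hf)

lemma exists_dotProduct_lt_of_notMem_convexHull {ι : Type*} [Fintype ι] {S : Set (ι → ℝ)}
    (hS : S.Finite) {x : ι → ℝ} (hx : x ∉ convexHull ℝ S) :
    ∃ c : ι → ℝ, ∀ y ∈ S, y ⬝ᵥ c < x ⬝ᵥ c := by
  classical
  obtain ⟨f, u, hfS, hfx⟩ := geometric_hahn_banach_closed_point (convex_convexHull ℝ S)
    (hS.isCompact_convexHull (𝕜 := ℝ)).isClosed hx
  refine ⟨fun i => f fun j => if i = j then 1 else 0, fun y hy => ?_⟩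
  have hf : ∀ v, f v = v ⬝ᵥ fun i => f fun j => if i = j then 1 else 0 :=
    LinearMap.pi_apply_eq_sum_univ f.toLinearMap
  rw [← hf, ← hf]
  exact (hfS y (subset_convexHull ℝ S hy)).trans hfx

lemma prod_exp_mul_rpow {ι : Type*} [Fintype ι] (t : ℝ) (c a : ι → ℝ) :
    ∏ i, exp (t * c i) ^ a i = exp (t * (a ⬝ᵥ c)) := by
  simp_rw [← Real.exp_mul, ← Real.exp_sum, dotProduct, Finset.mul_sum]
  congr 1
  exact Finset.sum_congr rfl fun i _ => by ring

lemma MvPolynomial.eval_exp_mul {σ : Type*} [Fintype σ] (p : MvPolynomial σ ℝ) (t : ℝ)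
    (c : σ → ℝ) :
    eval (fun i => exp (t * c i)) p =
      ∑ κ ∈ p.support, p.coeff κ * exp (t * ((fun i => (κ i : ℝ)) ⬝ᵥ c)) := by
  rw [eval_eq']
  refine Finset.sum_congr rfl fun κ _ => ?_
  simp_rw [← Real.rpow_natCast, prod_exp_mul_rpow]

lemma MvPolynomial.eval_nonneg_of_coeff_nonneg {σ : Type*} {p : MvPolynomial σ ℝ}
    (hp : ∀ κ, 0 ≤ p.coeff κ) {z : σ → ℝ} (hz : ∀ i, 0 < z i) : 0 ≤ eval z p := by
  rw [eval_eq]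
  exact Finset.sum_nonneg fun κ _ =>
    mul_nonneg (hp κ) (Finset.prod_nonneg fun i _ => pow_nonneg (hz i).le _)

lemma MvPolynomial.tendsto_eval_exp_mul_div_atTop {σ : Type*} [Fintype σ]
    (p : MvPolynomial σ ℝ) {c α : σ → ℝ}
    (hc : ∀ κ ∈ p.support, (fun i => (κ i : ℝ)) ⬝ᵥ c < α ⬝ᵥ c) :
    Tendsto (fun t => eval (fun i => exp (t * c i)) p / ∏ i, exp (t * c i) ^ α i)
      atTop (𝓝 0) := by
  simp_rw [eval_exp_mul, prod_exp_mul_rpow, Finset.sum_div, mul_div_assoc, ← Real.exp_sub,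
    ← mul_sub]
  rw [← Finset.sum_const_zero (s := p.support)]
  refine tendsto_finsetSum _ fun κ hκ => ?_
  simpa using (Real.tendsto_exp_atBot.comp
    (tendsto_id.atTop_mul_const_of_neg (sub_neg.2 (hc κ hκ)))).const_mul (p.coeff κ)

theorem inf_zero_of_not_mem_newton_general (n : ℕ) (p : MvPolynomial (Fin n) ℝ)
    (hp : ∀ κ, 0 ≤ p.coeff κ) (α : Fin n → ℝ)
    (hmem : α ∉ convexHull ℝ
      ((fun κ : Fin n →₀ ℕ => fun i => (κ i : ℝ)) '' ↑p.support)) :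
    (⨅ z : {z : Fin n → ℝ // ∀ i, 0 < z i},
        MvPolynomial.eval z.val p / ∏ i, (z.val i) ^ (α i)) = 0 := by
  obtain ⟨c, hc⟩ :=
    exists_dotProduct_lt_of_notMem_convexHull ((p.support.finite_toSet).image _) hmem
  have hratio_nonneg : ∀ z : {z : Fin n → ℝ // ∀ i, 0 < z i},
      0 ≤ MvPolynomial.eval z.val p / ∏ i, (z.val i) ^ (α i) := fun z =>
    div_nonneg (eval_nonneg_of_coeff_nonneg hp z.2)
      (Finset.prod_nonneg fun i _ => rpow_nonneg (z.2 i).le _)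
  exact Real.iInf_eq_zero_of_tendsto hratio_nonneg
    (g := fun t : ℝ => ⟨fun i => exp (t * c i), fun i => exp_pos _⟩)
    (tendsto_eval_exp_mul_div_atTop p fun κ hκ => hc _ ⟨κ, hκ, rfl⟩)

theorem inf_zero_of_not_mem_newton (n : ℕ) (p : MvPolynomial (Fin n) ℝ)
    (hp : ∀ κ, 0 ≤ p.coeff κ) (α : Fin n → ℝ) (hα : ∀ i, 0 ≤ α i)
    (hmem : α ∉ convexHull ℝ
      ((fun κ : Fin n →₀ ℕ => fun i => (κ i : ℝ)) '' ↑p.support)) :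
    (⨅ z : {z : Fin n → ℝ // ∀ i, 0 < z i},
        MvPolynomial.eval z.val p / ∏ i, (z.val i) ^ (α i)) = 0 :=
  inf_zero_of_not_mem_newton_general n p hp α hmem
end

section
/- Let p ∈ ℝ[z₁,...,zₙ] be a homogeneous polynomial of degree k that is real stable (no roots with all coordinates having positive imaginary part) and satisfies p(z) > 0 for all z in the open positive orthant. Then log p is concave on the open positive orthant. -/
/-!
Fix `x` and `y` in the positive orthant and put `g s = p ((1 - s) • x + s • y)`. By homogeneity,
`conj (1 - s) ^ k * g s = p (conj (1 - s) • ((1 - s) • x + s • y))`, a value of `p` at a point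
whose coordinates have imaginary parts `s.im * y i`. Real stability, together with its mirror image
under complex conjugation, therefore forces every root of `g` to be real, so
`g = c ∏ (X - r)`. As `g > 0` on `[0, 1]`, no root lies in `[0, 1]`, and
`log g = log c + ∑ log (s - r)` is a sum of concave functions there. Evaluating this concavity
at `s = 0` and `s = 1` is the concavity of `log p` on the segment from `x` to `y`.
-/

open Polynomial

-- `Real.log` is even, so this also covers a set `s` lying to the left of `r`.
theorem concaveOn_log_sub_of_notMem {s : Set ℝ} {r : ℝ} (hs : Convex ℝ s) (hr : r ∉ s) :
    ConcaveOn ℝ s fun x => Real.log (x - r) := by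
  have hside : s ⊆ Set.Ioi r ∨ s ⊆ Set.Iio r := by
    by_contra! h
    obtain ⟨a, ha, har⟩ := Set.not_subset.1 h.1
    obtain ⟨b, hb, hbr⟩ := Set.not_subset.1 h.2
    exact hr (hs.ordConnected.out ha hb ⟨not_lt.1 har, not_lt.1 hbr⟩)
  obtain ⟨t, hlog, hst⟩ : ∃ t : Set ℝ, ConcaveOn ℝ t Real.log ∧ ∀ x ∈ s, x - r ∈ t := by
    rcases hside with h | h
    · exact ⟨Set.Ioi 0, strictConcaveOn_log_Ioi.concaveOn,
        fun x hx => Set.mem_Ioi.2 (sub_pos.2 (h hx))⟩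
    · exact ⟨Set.Iio 0, strictConcaveOn_log_Iio.concaveOn,
        fun x hx => Set.mem_Iio.2 (sub_neg.2 (h hx))⟩
  refine ⟨hs, fun x hx y hy a b ha hb hab => ?_⟩
  convert hlog.2 (hst x hx) (hst y hy) ha hb hab using 2
  simp only [smul_eq_mul]
  linear_combination r * hab

namespace Polynomial

theorem splits_of_forall_aeval_eq_zero_im_eq_zero {f : ℝ[X]}
    (h : ∀ z : ℂ, aeval z f = 0 → z.im = 0) : f.Splits := by
  refine Splits.of_splits_map (algebraMap ℝ ℂ) (IsAlgClosed.splits _) fun z hz => ⟨z.re, ?_⟩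
  have hz : aeval z f = 0 := by rw [← eval_map_algebraMap]; exact isRoot_of_mem_roots hz
  exact Complex.ext (by simp) (by simp [h z hz])

theorem Splits.concaveOn_log_eval {f : ℝ[X]} (hf : f.Splits) {s : Set ℝ} (hs : Convex ℝ s)
    (h : ∀ x ∈ s, f.eval x ≠ 0) : ConcaveOn ℝ s fun x => Real.log (f.eval x) := by
  have hsum : ∀ m : Multiset ℝ, (∀ r ∈ m, r ∉ s) →
      ConcaveOn ℝ s fun x => (m.map fun r => Real.log (x - r)).sum := by
    intro m
    induction m using Multiset.induction with
    | empty => intro _; simpa using concaveOn_const (0 : ℝ) hs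
    | cons r m ih =>
      intro hm
      simp only [Multiset.map_cons, Multiset.sum_cons]
      exact (concaveOn_log_sub_of_notMem hs (hm r (Multiset.mem_cons_self r m))).add
        (ih fun r' hr' => hm r' (Multiset.mem_cons_of_mem hr'))
  refine ((hsum f.roots fun r hr hrs => h r hrs (isRoot_of_mem_roots hr)).add_const
    (Real.log f.leadingCoeff)).congr fun x hx => ?_
  have hx0 := h x hx
  rw [hf.eval_eq_prod_roots] at hx0 ⊢
  rw [Real.log_mul (left_ne_zero_of_mul hx0) (right_ne_zero_of_mul hx0), Real.log_multiset_prod,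
    Multiset.map_map, add_comm]
  · rfl
  · exact fun a ha ha0 => right_ne_zero_of_mul hx0 (Multiset.prod_eq_zero (ha0 ▸ ha))

end Polynomial

namespace MvPolynomial

variable {σ : Type*}

theorem IsHomogeneous.aeval_smul {R A : Type*} [CommSemiring R] [CommSemiring A] [Algebra R A]
    {φ : MvPolynomial σ R} {n : ℕ} (hφ : φ.IsHomogeneous n) (c : A) (v : σ → A) :
    MvPolynomial.aeval (c • v) φ = c ^ n * MvPolynomial.aeval v φ := by
  simp only [aeval_eq_eval₂Hom, coe_eval₂Hom, eval₂_eq, Finset.mul_sum]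
  refine Finset.sum_congr rfl fun d hd => ?_
  rw [hφ.degree_eq_sum_deg_support hd, ← Finset.prod_pow_eq_pow_sum, mul_left_comm,
    ← Finset.prod_mul_distrib]
  simp only [Pi.smul_apply, smul_eq_mul, mul_pow]

theorem aeval_ne_zero_of_forall_im_neg {p : MvPolynomial σ ℝ}
    (hstable : ∀ z : σ → ℂ, (∀ i, 0 < (z i).im) → aeval z p ≠ 0) {z : σ → ℂ}
    (hz : ∀ i, (z i).im < 0) : aeval z p ≠ 0 := by
  have hconj : aeval (fun i => (starRingEnd ℂ) (z i)) p = (starRingEnd ℂ) (aeval z p) :=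
    (comp_aeval_apply z Complex.conjAe.toAlgHom p).symm
  intro h
  refine hstable (fun i => (starRingEnd ℂ) (z i)) (fun i => ?_) (by rw [hconj, h, map_zero])
  simpa using neg_pos.2 (hz i)

section restrictLine

variable {R A : Type*} [CommRing R] [CommRing A] [Algebra R A]

noncomputable def restrictLine (p : MvPolynomial σ R) (x y : σ → R) : R[X] :=
  aeval (fun i => (1 - Polynomial.X) * Polynomial.C (x i) + Polynomial.X * Polynomial.C (y i)) p

theorem aeval_restrictLine (p : MvPolynomial σ R) (x y : σ → R) (t : A) :
    Polynomial.aeval t (p.restrictLine x y) =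
      aeval (fun i => (1 - t) * algebraMap R A (x i) + t * algebraMap R A (y i)) p := by
  rw [restrictLine, comp_aeval_apply]
  simp only [map_add, map_mul, map_sub, map_one, Polynomial.aeval_C, Polynomial.aeval_X]

theorem eval_restrictLine (p : MvPolynomial σ R) (x y : σ → R) (t : R) :
    (p.restrictLine x y).eval t = eval ((1 - t) • x + t • y) p := by
  rw [← Polynomial.coe_aeval_eq_eval, aeval_restrictLine]
  rfl

end restrictLine

theorem aeval_restrictLine_ne_zero {p : MvPolynomial σ ℝ} {k : ℕ}
    (hstable : ∀ z : σ → ℂ, (∀ i, 0 < (z i).im) → aeval z p ≠ 0) (hhom : p.IsHomogeneous k)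
    (x : σ → ℝ) {y : σ → ℝ} (hy : ∀ i, 0 < y i) {s : ℂ} (hs : s.im ≠ 0) :
    Polynomial.aeval s (p.restrictLine x y) ≠ 0 := by
  set c := (starRingEnd ℂ) (1 - s)
  set z : σ → ℂ := fun i => (1 - s) * algebraMap ℝ ℂ (x i) + s * algebraMap ℝ ℂ (y i)
  have him : ∀ i, ((c • z) i).im = s.im * y i := by
    intro i
    simp only [c, z, Pi.smul_apply, smul_eq_mul, Complex.coe_algebraMap, map_sub, map_one,
      Complex.mul_im, Complex.mul_re, Complex.add_im, Complex.add_re, Complex.sub_im,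
      Complex.sub_re, Complex.conj_im, Complex.conj_re, Complex.ofReal_im, Complex.ofReal_re,
      Complex.one_im, Complex.one_re]
    ring
  rw [aeval_restrictLine]
  refine right_ne_zero_of_mul (a := c ^ k) ?_
  rw [← hhom.aeval_smul]
  rcases hs.lt_or_gt with hneg | hpos
  · exact aeval_ne_zero_of_forall_im_neg hstable fun i => by
      rw [him]; exact mul_neg_of_neg_of_pos hneg (hy i)
  · exact hstable _ fun i => by rw [him]; exact mul_pos hpos (hy i)

theorem splits_restrictLine {p : MvPolynomial σ ℝ} {k : ℕ}
    (hstable : ∀ z : σ → ℂ, (∀ i, 0 < (z i).im) → aeval z p ≠ 0) (hhom : p.IsHomogeneous k)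
    (x : σ → ℝ) {y : σ → ℝ} (hy : ∀ i, 0 < y i) : (p.restrictLine x y).Splits :=
  Polynomial.splits_of_forall_aeval_eq_zero_im_eq_zero fun _ hs =>
    not_not.1 fun him => aeval_restrictLine_ne_zero hstable hhom x hy him hs

end MvPolynomial

theorem log_concave_of_real_stable (n k : ℕ) (p : MvPolynomial (Fin n) ℝ)
    (hstable : ∀ z : Fin n → ℂ, (∀ i, 0 < (z i).im) → MvPolynomial.aeval z p ≠ 0)
    (hhom : p.IsHomogeneous k)
    (hpos : ∀ z : Fin n → ℝ, (∀ i, 0 < z i) → 0 < MvPolynomial.eval z p) :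
    ConcaveOn ℝ {z : Fin n → ℝ | ∀ i, 0 < z i}
      (fun z => Real.log (MvPolynomial.eval z p)) := by
  have hconvex : Convex ℝ {z : Fin n → ℝ | ∀ i, 0 < z i} := by
    simpa [Set.pi] using convex_pi (s := Set.univ) fun (_ : Fin n) _ => convex_Ioi (0 : ℝ)
  refine ⟨hconvex, fun x hx y hy a b ha hb hab => ?_⟩
  have hsegment : ∀ t ∈ Set.Icc (0 : ℝ) 1, (p.restrictLine x y).eval t ≠ 0 := fun t ht => by
    rw [MvPolynomial.eval_restrictLine]
    exact (hpos _ (hconvex hx hy (sub_nonneg.2 ht.2) ht.1 (sub_add_cancel 1 t))).ne'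
  have hconcave := (MvPolynomial.splits_restrictLine hstable hhom x hy).concaveOn_log_eval
    (convex_Icc 0 1) hsegment
  have hendpoints :=
    hconcave.2 (Set.left_mem_Icc.2 zero_le_one) (Set.right_mem_Icc.2 zero_le_one) ha hb hab
  obtain rfl : a = 1 - b := eq_sub_of_add_eq hab
  simpa [MvPolynomial.eval_restrictLine] using hendpoints
end

section
/- Let p(a + tb) be considered along a segment: if p ∈ ℝ[z₁,...,zₙ] is real stable, k-homogeneous, positive on the open positive orthant, a is in the open positive orthant, and a + tb is in the open positive orthant for all t ∈ [0,1], then there exist real numbers λ₁,...,λₖ, all strictly less than 1, such that p(a + tb) = p(a)·∏ᵢ(1 - tλᵢ) for all t ∈ [0,1]. -/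
/-!
By homogeneity `p (a + z b) = z ^ k * p (a / z + b)`, and for `Im z < 0` every coordinate of
`a / z + b` has positive imaginary part; so real stability forbids roots of `q z = p (a + z b)`
in the lower half-plane, and since `q` has real coefficients also in the upper one. Thus `q`
is a real-rooted polynomial of degree at most `k` with `q 0 = p a ≠ 0`, whence
`q t = q 0 * ∏ (1 - t / τ)` over its roots `τ`. Positivity of `p` on the segment keeps the roots
off `[0, 1]`, so `λ = 1 / τ < 1`; padding with `λ = 0` gives exactly `k` factors.
-/

open Polynomial

namespace Multiset

variable {α : Type*}

theorem exists_fin_map_eq_of_card_eq {s : Multiset α} {k : ℕ} (h : card s = k) :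
    ∃ f : Fin k → α, Finset.univ.val.map f = s := by
  obtain ⟨l, rfl⟩ : ∃ l : List α, (l : Multiset α) = s := Quot.exists_rep s
  obtain rfl : l.length = k := h
  exact ⟨l.get, by rw [Fin.univ_val_map, List.ofFn_get]⟩

theorem exists_fin_prod_map_eq_of_card_le {M : Type*} [CommMonoid M] {s : Multiset α} {k : ℕ}
    (h : card s ≤ k) (x : α) :
    ∃ f : Fin k → α, (∀ i, f i ∈ s ∨ f i = x) ∧
      ∀ g : α → M, g x = 1 → ∏ i, g (f i) = (s.map g).prod := by
  obtain ⟨f, hf⟩ := exists_fin_map_eq_of_card_eq (s := s + replicate (k - card s) x) (k := k)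
    (by rw [card_add, card_replicate]; omega)
  refine ⟨f, fun i => ?_, fun g hg => ?_⟩
  · have hi : f i ∈ s + replicate (k - card s) x := hf ▸ mem_map_of_mem f (Finset.mem_univ i)
    exact (mem_add.mp hi).imp_right eq_of_mem_replicate
  · simpa [hg, Finset.prod_eq_multiset_prod, map_map, Function.comp_def] using
      congrArg (fun m => (m.map g).prod) hf

end Multiset

namespace Polynomial

theorem Splits.eval_eq_eval_zero_mul_prod_roots {K : Type*} [Field K] {f : K[X]} (hf : f.Splits)
    (h0 : f.eval 0 ≠ 0) (x : K) :
    f.eval x = f.eval 0 * (f.roots.map fun τ => 1 - x * τ⁻¹).prod := by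
  rw [hf.eval_eq_prod_roots x, hf.eval_eq_prod_roots 0, mul_assoc, ← Multiset.prod_map_mul]
  congr 2
  refine Multiset.map_congr rfl fun τ hτ => ?_
  have hτ0 : τ ≠ 0 := by
    rintro rfl
    exact h0 (isRoot_of_mem_roots hτ)
  field_simp
  ring

theorem eval_ofReal_eq_eval_zero_mul_prod_roots {f : ℂ[X]} (h0 : f.eval 0 ≠ 0)
    (hreal : ∀ τ ∈ f.roots, τ.im = 0) (t : ℝ) :
    f.eval (t : ℂ) = f.eval 0 * ((f.roots.map fun τ => 1 - t * τ.re⁻¹).prod : ℝ) := by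
  have hcast := map_multiset_prod Complex.ofRealHom (f.roots.map fun τ => 1 - t * τ.re⁻¹)
  simp only [Complex.ofRealHom_eq_coe, Multiset.map_map] at hcast
  rw [(IsAlgClosed.splits f).eval_eq_eval_zero_mul_prod_roots h0, hcast]
  congr 2
  refine Multiset.map_congr rfl fun τ hτ => ?_
  conv_lhs => rw [← Complex.re_add_im τ, hreal τ hτ]
  simp

end Polynomial

namespace MvPolynomial

section Homogeneous

variable {σ R S : Type*} [CommSemiring R] [CommSemiring S] [Algebra R S]

theorem IsHomogeneous.aeval_smul_s11 {p : MvPolynomial σ R} {k : ℕ} (hp : p.IsHomogeneous k)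
    (c : S) (v : σ → S) : MvPolynomial.aeval (c • v) p = c ^ k * MvPolynomial.aeval v p := by
  simp only [aeval_def, eval₂_eq, Finset.mul_sum, Pi.smul_apply, smul_eq_mul, mul_pow,
    Finset.prod_mul_distrib, Finset.prod_pow_eq_pow_sum]
  refine Finset.sum_congr rfl fun d hd => ?_
  have hdeg : d.degree = k := by
    rw [Finsupp.degree_eq_weight_one]
    exact hp (mem_support_iff.mp hd)
  rw [show ∑ i ∈ d.support, d i = k from hdeg]
  ring

theorem natDegree_aeval_le_totalDegree (p : MvPolynomial σ R) {g : σ → S[X]}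
    (hg : ∀ i, (g i).natDegree ≤ 1) : (aeval g p).natDegree ≤ p.totalDegree := by
  rw [aeval_def, eval₂_eq]
  refine natDegree_sum_le_of_forall_le _ _ fun d hd => ?_
  calc (algebraMap R S[X] (coeff d p) * ∏ i ∈ d.support, g i ^ d i).natDegree
      ≤ ∑ i ∈ d.support, (g i ^ d i).natDegree := by
        refine natDegree_mul_le.trans ?_
        rw [Polynomial.algebraMap_apply, natDegree_C, zero_add]
        exact natDegree_prod_le _ _
    _ ≤ ∑ i ∈ d.support, d i := Finset.sum_le_sum fun i _ =>
        natDegree_pow_le.trans (by simpa using Nat.mul_le_mul_left (d i) (hg i))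
    _ ≤ p.totalDegree := le_totalDegree hd

end Homogeneous

section RealStable

open ComplexConjugate

variable {σ : Type*}

def IsRealStable (p : MvPolynomial σ ℝ) : Prop :=
  ∀ z : σ → ℂ, (∀ i, 0 < (z i).im) → aeval z p ≠ 0

noncomputable def linePolynomial (p : MvPolynomial σ ℝ) (a b : σ → ℝ) : ℂ[X] :=
  aeval (fun i => Polynomial.C (a i : ℂ) + Polynomial.C (b i : ℂ) * Polynomial.X) p

variable (p : MvPolynomial σ ℝ) (a b : σ → ℝ)

theorem eval_linePolynomial (z : ℂ) :
    (linePolynomial p a b).eval z = aeval (fun i => (a i : ℂ) + b i * z) p := by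
  have h := comp_aeval_apply ((Polynomial.aeval z).restrictScalars ℝ) p
    (f := fun i => Polynomial.C (a i : ℂ) + Polynomial.C (b i : ℂ) * Polynomial.X)
  simp only [AlgHom.coe_restrictScalars', Polynomial.coe_aeval_eq_eval, Polynomial.eval_add,
    Polynomial.eval_C, Polynomial.eval_mul, Polynomial.eval_X] at h
  exact h

theorem eval_ofReal_linePolynomial (t : ℝ) :
    (linePolynomial p a b).eval (t : ℂ) = eval (fun i => a i + t * b i) p := by
  rw [eval_linePolynomial]
  simpa [mul_comm] using (comp_aeval_apply (Algebra.ofId ℝ ℂ) p (f := fun i => a i + t * b i)).symm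

theorem eval_conj_linePolynomial (z : ℂ) :
    (linePolynomial p a b).eval (conj z) = conj ((linePolynomial p a b).eval z) := by
  simpa [eval_linePolynomial] using
    (comp_aeval_apply Complex.conjAe.toAlgHom p (f := fun i => (a i : ℂ) + b i * z)).symm

theorem natDegree_linePolynomial_le : (linePolynomial p a b).natDegree ≤ p.totalDegree :=
  natDegree_aeval_le_totalDegree p fun i => by
    rw [natDegree_C_add]
    exact (natDegree_C_mul_le _ _).trans natDegree_X_le

variable {p a} {k : ℕ}

theorem IsRealStable.eval_linePolynomial_ne_zero_of_im_neg (hp : p.IsRealStable)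
    (hhom : p.IsHomogeneous k) (ha : ∀ i, 0 < a i) {z : ℂ} (hz : z.im < 0) :
    (linePolynomial p a b).eval z ≠ 0 := by
  have hz0 : z ≠ 0 := by
    rintro rfl
    simp at hz
  have hscale : (fun i => (a i : ℂ) + b i * z) = z • fun i => (a i : ℂ) * z⁻¹ + b i := by
    funext i
    simp only [Pi.smul_apply, smul_eq_mul]
    field_simp
  rw [eval_linePolynomial, hscale, hhom.aeval_smul_s11]
  refine mul_ne_zero (pow_ne_zero k hz0) (hp _ fun i => ?_)
  have him : ((a i : ℂ) * z⁻¹ + b i).im = a i * (-z.im / Complex.normSq z) := by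
    simp [Complex.inv_im, neg_div]
  rw [him]
  exact mul_pos (ha i) (div_pos (neg_pos.mpr hz) (Complex.normSq_pos.mpr hz0))

theorem IsRealStable.im_eq_zero_of_mem_roots_linePolynomial (hp : p.IsRealStable)
    (hhom : p.IsHomogeneous k) (ha : ∀ i, 0 < a i) {τ : ℂ}
    (hτ : τ ∈ (linePolynomial p a b).roots) : τ.im = 0 := by
  have hroot : (linePolynomial p a b).eval τ = 0 := isRoot_of_mem_roots hτ
  rcases lt_trichotomy τ.im 0 with hneg | hzero | hpos
  · exact absurd hroot (hp.eval_linePolynomial_ne_zero_of_im_neg b hhom ha hneg)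
  · exact hzero
  · refine absurd ?_ (hp.eval_linePolynomial_ne_zero_of_im_neg b hhom ha (z := conj τ) ?_)
    · rw [eval_conj_linePolynomial, hroot, map_zero]
    · simpa using hpos

end RealStable

end MvPolynomial

open MvPolynomial in
theorem segment_factorization (n k : ℕ) (p : MvPolynomial (Fin n) ℝ)
    (hstable : ∀ z : Fin n → ℂ, (∀ i, 0 < (z i).im) → MvPolynomial.aeval z p ≠ 0)
    (hhom : p.IsHomogeneous k)
    (hpos : ∀ z : Fin n → ℝ, (∀ i, 0 < z i) → 0 < MvPolynomial.eval z p)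
    (a b : Fin n → ℝ) (ha : ∀ i, 0 < a i)
    (hab : ∀ t ∈ Set.Icc (0 : ℝ) 1, ∀ i, 0 < a i + t * b i) :
    ∃ lam : Fin k → ℝ, (∀ i, lam i < 1) ∧
      ∀ t ∈ Set.Icc (0 : ℝ) 1,
        MvPolynomial.eval (fun i => a i + t * b i) p
          = MvPolynomial.eval a p * ∏ i, (1 - t * lam i) := by
  set q := linePolynomial p a b
  have hq0 : q.eval 0 = (eval a p : ℂ) := by simpa using eval_ofReal_linePolynomial p a b 0
  have hreal : ∀ τ ∈ q.roots, τ.im = 0 := fun τ hτ =>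
    IsRealStable.im_eq_zero_of_mem_roots_linePolynomial b hstable hhom ha hτ
  have hoff : ∀ τ ∈ q.roots, τ.re ∉ Set.Icc (0 : ℝ) 1 := by
    intro τ hτ hseg
    have hroot : q.eval (τ.re : ℂ) = 0 := by
      rw [show (τ.re : ℂ) = τ from Complex.ext rfl (by simp [hreal τ hτ])]
      exact isRoot_of_mem_roots hτ
    rw [eval_ofReal_linePolynomial, Complex.ofReal_eq_zero] at hroot
    exact (hpos _ (hab _ hseg)).ne' hroot
  have hcard : Multiset.card (q.roots.map fun τ => τ.re⁻¹) ≤ k := (Multiset.card_map _ _).trans_le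
    ((card_roots' q).trans ((natDegree_linePolynomial_le p a b).trans hhom.totalDegree_le))
  obtain ⟨lam, hmem, hprod⟩ := Multiset.exists_fin_prod_map_eq_of_card_le (M := ℝ) hcard 0
  refine ⟨lam, fun i => ?_, fun t _ => ?_⟩
  · rcases hmem i with h | h
    · obtain ⟨τ, hτ, hlam⟩ := Multiset.mem_map.mp h
      rw [← hlam, inv_lt_one_iff₀]
      by_contra! hseg
      exact hoff τ hτ ⟨hseg.1.le, hseg.2⟩
    · simp [h]
  · have hq0_ne : q.eval 0 ≠ 0 := hq0 ▸ Complex.ofReal_ne_zero.mpr (hpos a ha).ne'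
    apply Complex.ofReal_injective
    rw [← eval_ofReal_linePolynomial, eval_ofReal_eq_eval_zero_mul_prod_roots hq0_ne hreal t, hq0,
      hprod (fun l => 1 - t * l) (by simp), Multiset.map_map, Complex.ofReal_mul]
    rfl
end

section
/- For any real stable polynomial p(z₁,...,zₙ) and any indices 1 ≤ i, j ≤ n, the polynomial (1 - ∂_{zᵢ}∂_{zⱼ}) p is real stable. -/
/-!
Fix `z` in the open upper half-space and restrict to the complex line through `z` in the
direction `zᵢ`: `P(x) = p(z[i ↦ x])`, `S(x) = ∂ⱼp(z[i ↦ x])`, so that `S' = ∂ᵢ∂ⱼp` on that line.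
For a univariate `f` with no roots in the upper half-plane `H`, `f'/f = ∑ 1/(x - r)` has negative
imaginary part on `H` unless `f' = 0`; hence `f + w f'` has no roots in `H` when `Im w > 0`.
Applied in the variable `zⱼ` this gives `P(x) + w S(x) ≠ 0` for `x, w ∈ H`, i.e. `Im (P/S) ≥ 0`
on `H`. Then `S` has no zeros in `H` unless `S = 0`: at a zero, `Im (S/P) = Im (P/S)⁻¹ ≤ 0` would
attain its maximum, against the open mapping theorem. Finally `P(x) = S'(x)` would force
`Im (P/S)(x) = Im (S'/S)(x) < 0` (this is the Lieb–Sokal lemma).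
-/

open Polynomial Filter Topology

theorem AnalyticAt.eventually_eq_of_isLocalMax_im {E : Type*} [NormedAddCommGroup E]
    [NormedSpace ℂ E] {g : E → ℂ} {c : E} (hg : AnalyticAt ℂ g c)
    (hmax : IsLocalMax (fun x => (g x).im) c) : ∀ᶠ x in 𝓝 c, g x = g c := by
  refine hg.eventually_constant_or_nhds_le_map_nhds.resolve_right fun hopen => ?_
  have hle : ∀ᶠ w in 𝓝 (g c), w.im ≤ (g c).im := hopen hmax
  have hup : Tendsto (fun t : ℝ => g c + t * Complex.I) (𝓝[>] 0) (𝓝 (g c)) := by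
    refine tendsto_nhdsWithin_of_tendsto_nhds ?_
    simpa using ((Complex.continuous_ofReal.mul continuous_const).const_add (g c)).tendsto 0
  obtain ⟨t, ht, hpos⟩ := ((hup.eventually hle).and self_mem_nhdsWithin).exists
  simp only [Complex.add_im, Complex.mul_im, Complex.ofReal_re, Complex.I_im, mul_one,
    Complex.ofReal_im, Complex.I_re, mul_zero, add_zero, add_le_iff_nonpos_right] at ht
  exact ht.not_gt hpos

theorem Polynomial.eq_zero_of_eventually_eval_eq_zero {𝕜 : Type*} [NontriviallyNormedField 𝕜]
    {f : 𝕜[X]} {c : 𝕜} (h : ∀ᶠ x in 𝓝 c, f.eval x = 0) : f = 0 := by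
  obtain ⟨s, hs, hroot⟩ := h.exists_mem
  exact f.eq_zero_of_infinite_isRoot ((infinite_of_mem_nhds c hs).mono hroot)

theorem Complex.inv_im_nonpos {z : ℂ} (hz : 0 ≤ z.im) : z⁻¹.im ≤ 0 := by
  rw [Complex.inv_im, neg_div]
  exact neg_nonpos.mpr (div_nonneg hz (Complex.normSq_nonneg z))

theorem Complex.inv_im_neg {z : ℂ} (hz : 0 < z.im) : z⁻¹.im < 0 := by
  have hz0 : z ≠ 0 := by rintro rfl; simp at hz
  rw [Complex.inv_im, neg_div]
  exact neg_neg_of_pos (div_pos hz (Complex.normSq_pos.mpr hz0))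

theorem Complex.im_div_nonneg_of_forall_add_mul_ne_zero {a b : ℂ}
    (h : ∀ w : ℂ, 0 < w.im → a + w * b ≠ 0) : 0 ≤ (a / b).im := by
  by_contra! hneg
  have hb : b ≠ 0 := by rintro rfl; simp at hneg
  exact h (-(a / b)) (by simpa using hneg) (by field_simp; ring)

namespace Polynomial

variable {f P S : ℂ[X]} {x : ℂ}

theorem eval_derivative_eq_zero_or_im_div_neg (hf : ∀ y : ℂ, 0 < y.im → f.eval y ≠ 0)
    (hx : 0 < x.im) : f.derivative.eval x = 0 ∨ (f.derivative.eval x / f.eval x).im < 0 := by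
  have hfx := hf x hx
  have hlog := (IsAlgClosed.splits f).eval_derivative_div_eval_of_ne_zero hfx
  rcases eq_or_ne f.roots 0 with h0 | h0
  · left; simpa [h0, hfx] using hlog
  right
  rw [hlog]
  have hterm : ∀ r ∈ f.roots, (1 / (x - r)).im < 0 := fun r hr => by
    have : r.im ≤ 0 := not_lt.mp fun hr' => hf r hr' (isRoot_of_mem_roots hr)
    rw [one_div]
    exact Complex.inv_im_neg (by simp; linarith)
  have him := map_multiset_sum Complex.imAddGroupHom (f.roots.map fun r => 1 / (x - r))
  rw [Complex.coe_imAddGroupHom, Multiset.map_map] at him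
  rw [him]
  simpa using Multiset.sum_lt_sum_of_nonempty (g := fun _ => (0 : ℝ)) h0 hterm

theorem eval_add_mul_eval_derivative_ne_zero (hf : ∀ y : ℂ, 0 < y.im → f.eval y ≠ 0)
    (hx : 0 < x.im) {w : ℂ} (hw : 0 < w.im) : f.eval x + w * f.derivative.eval x ≠ 0 := by
  rcases eval_derivative_eq_zero_or_im_div_neg hf hx with h0 | hneg
  · simpa [h0] using hf x hx
  intro h
  have hw0 : w ≠ 0 := by rintro rfl; simp at hw
  have : f.derivative.eval x / f.eval x = -w⁻¹ := by
    field_simp [hf x hx]; linear_combination h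
  rw [this, Complex.neg_im] at hneg
  linarith [Complex.inv_im_neg hw]

theorem eq_zero_or_eval_ne_zero_of_forall_add_mul_ne_zero
    (hP : ∀ x : ℂ, 0 < x.im → P.eval x ≠ 0)
    (hPS : ∀ x : ℂ, 0 < x.im → ∀ w : ℂ, 0 < w.im → P.eval x + w * S.eval x ≠ 0) :
    S = 0 ∨ ∀ x : ℂ, 0 < x.im → S.eval x ≠ 0 := by
  by_contra! hS
  obtain ⟨hS0, c, hc, hSc⟩ := hS
  have hUpper : ∀ᶠ x in 𝓝 c, 0 < x.im :=
    (Complex.continuous_im.isOpen_preimage _ isOpen_Ioi).mem_nhds hc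
  have hmax : IsLocalMax (fun x => (S.eval x / P.eval x).im) c := by
    filter_upwards [hUpper] with x hx
    rw [hSc, zero_div, Complex.zero_im, ← inv_div]
    exact Complex.inv_im_nonpos
      (Complex.im_div_nonneg_of_forall_add_mul_ne_zero (hPS x hx))
  have hanalytic : AnalyticAt ℂ (fun x => S.eval x / P.eval x) c :=
    (S.differentiable.analyticAt c).div (P.differentiable.analyticAt c) (hP c hc)
  refine hS0 (eq_zero_of_eventually_eval_eq_zero (c := c) ?_)
  filter_upwards [hanalytic.eventually_eq_of_isLocalMax_im hmax, hUpper] with x hx hxU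
  simpa [hSc, hP x hxU] using hx

theorem eval_ne_eval_derivative (hP : ∀ x : ℂ, 0 < x.im → P.eval x ≠ 0)
    (hPS : ∀ x : ℂ, 0 < x.im → ∀ w : ℂ, 0 < w.im → P.eval x + w * S.eval x ≠ 0)
    (hx : 0 < x.im) : P.eval x ≠ S.derivative.eval x := by
  intro hPx
  rcases eq_zero_or_eval_ne_zero_of_forall_add_mul_ne_zero hP hPS with rfl | hS
  · simp [hP x hx] at hPx
  rcases eval_derivative_eq_zero_or_im_div_neg hS hx with h0 | hneg
  · exact hP x hx (hPx.trans h0)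
  rw [← hPx] at hneg
  exact hneg.not_ge (Complex.im_div_nonneg_of_forall_add_mul_ne_zero (hPS x hx))

end Polynomial

namespace MvPolynomial

variable {σ R A : Type*} [DecidableEq σ] [CommSemiring R] [CommSemiring A] [Algebra R A]

noncomputable def sliceAt (z : σ → A) (i : σ) : MvPolynomial σ R →ₐ[R] A[X] :=
  aeval (Function.update (fun k => Polynomial.C (z k)) i Polynomial.X)

@[simp]
theorem sliceAt_X (z : σ → A) (i k : σ) :
    sliceAt (R := R) z i (X k) = Function.update (fun k => Polynomial.C (z k)) i Polynomial.X k :=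
  aeval_X _ k

theorem eval_sliceAt (z : σ → A) (i : σ) (p : MvPolynomial σ R) (x : A) :
    (sliceAt z i p).eval x = aeval (Function.update z i x) p := by
  induction p using MvPolynomial.induction_on with
  | C a => simp [sliceAt, Polynomial.algebraMap_apply]
  | add p q hp hq => simp only [map_add, Polynomial.eval_add, hp, hq]
  | mul_X p k hp =>
    rcases eq_or_ne k i with rfl | hk
    · simp [hp]
    · simp [hp, hk]

theorem derivative_sliceAt (z : σ → A) (i : σ) (p : MvPolynomial σ R) :
    derivative (sliceAt z i p) = sliceAt z i (pderiv i p) := by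
  induction p using MvPolynomial.induction_on with
  | C a => simp [sliceAt, Polynomial.algebraMap_apply]
  | add p q hp hq => simp only [map_add, hp, hq]
  | mul_X p k hp =>
    rcases eq_or_ne k i with rfl | hk
    · simp [hp]; ring
    · simp [hp, hk, mul_comm]

section Stable

variable [Algebra R ℂ] {p : MvPolynomial σ R} {z : σ → ℂ}

theorem forall_im_update_pos (hz : ∀ k, 0 < (z k).im) (i : σ) {x : ℂ} (hx : 0 < x.im) :
    ∀ k, 0 < (Function.update z i x k).im :=
  (Function.forall_update_iff z fun _ y => 0 < y.im).2 ⟨hx, fun k _ => hz k⟩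

theorem eval_sliceAt_ne_zero (hp : ∀ z : σ → ℂ, (∀ k, 0 < (z k).im) → aeval z p ≠ 0)
    (hz : ∀ k, 0 < (z k).im) (i : σ) {x : ℂ} (hx : 0 < x.im) : (sliceAt z i p).eval x ≠ 0 := by
  rw [eval_sliceAt]
  exact hp _ (forall_im_update_pos hz i hx)

theorem aeval_add_mul_aeval_pderiv_ne_zero
    (hp : ∀ z : σ → ℂ, (∀ k, 0 < (z k).im) → aeval z p ≠ 0)
    (hz : ∀ k, 0 < (z k).im) (j : σ) {w : ℂ} (hw : 0 < w.im) :
    aeval z p + w * aeval z (pderiv j p) ≠ 0 := by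
  have h := Polynomial.eval_add_mul_eval_derivative_ne_zero
    (fun _ hy => eval_sliceAt_ne_zero hp hz j hy) (hz j) hw
  rwa [derivative_sliceAt, eval_sliceAt, eval_sliceAt, Function.update_eq_self] at h

theorem aeval_ne_aeval_pderiv_pderiv
    (hp : ∀ z : σ → ℂ, (∀ k, 0 < (z k).im) → aeval z p ≠ 0)
    (hz : ∀ k, 0 < (z k).im) (i j : σ) : aeval z p ≠ aeval z (pderiv i (pderiv j p)) := by
  have hPS : ∀ x : ℂ, 0 < x.im → ∀ w : ℂ, 0 < w.im →
      (sliceAt z i p).eval x + w * (sliceAt z i (pderiv j p)).eval x ≠ 0 := fun x hx w hw => by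
    rw [eval_sliceAt, eval_sliceAt]
    exact aeval_add_mul_aeval_pderiv_ne_zero hp (forall_im_update_pos hz i hx) j hw
  have h := Polynomial.eval_ne_eval_derivative
    (fun _ hx => eval_sliceAt_ne_zero hp hz i hx) hPS (hz i)
  rwa [derivative_sliceAt, eval_sliceAt, eval_sliceAt, Function.update_eq_self] at h

end Stable

end MvPolynomial

theorem one_sub_pderiv_pderiv_stable (n : ℕ) (p : MvPolynomial (Fin n) ℝ) (i j : Fin n)
    (hp : p = 0 ∨ ∀ z : Fin n → ℂ, (∀ k, 0 < (z k).im) → MvPolynomial.aeval z p ≠ 0) :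
    (p - MvPolynomial.pderiv i (MvPolynomial.pderiv j p)) = 0 ∨
      ∀ z : Fin n → ℂ, (∀ k, 0 < (z k).im) →
        MvPolynomial.aeval z (p - MvPolynomial.pderiv i (MvPolynomial.pderiv j p)) ≠ 0 := by
  rcases hp with rfl | hp
  · simp
  · refine Or.inr fun z hz => ?_
    rw [map_sub, sub_ne_zero]
    exact MvPolynomial.aeval_ne_aeval_pderiv_pderiv hp hz i j
end

section
/- Let p(y₁,...,yₘ) be a multilinear real stable polynomial. Then for all 1 ≤ i < j ≤ m and all x ∈ ℝᵐ: (∂_{yᵢ}p)(x) · (∂_{yⱼ}p)(x) ≥ p(x) · (∂_{yᵢ}∂_{yⱼ}p)(x). -/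
/-!
For `z` in the open upper half-space, `t ↦ p(z[j ↦ t])` is affine with root
`zⱼ - p(z) / ∂ⱼp(z)`, so stability says exactly that `Im (p(z) · conj ∂ⱼp(z)) ≥ 0`.
Restricting `p` to a line `s ↦ x + s v` with `v > 0` (which maps the upper half-plane into the
upper half-space) gives real polynomials `f, g` with `Im (f · conj g) ≥ 0` on the upper
half-plane; this quantity vanishes on `ℝ`, so its derivative in the imaginary direction, the
Wronskian `f'g - fg'`, is nonnegative there. At `s = 0` the Wronskian is
`∑ₖ vₖ (∂ₖp ∂ⱼp - p ∂ₖ∂ⱼp)(x)`, and letting `v → eᵢ` gives the claim.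
-/

open ComplexConjugate Filter Topology

theorem nonneg_of_hasDerivAt_of_le_right {f : ℝ → ℝ} {f' a : ℝ} (hf : HasDerivAt f f' a)
    (h : ∀ t, 0 < t → f a ≤ f (a + t)) : 0 ≤ f' := by
  refine ge_of_tendsto hf.tendsto_slope_zero_right ?_
  filter_upwards [self_mem_nhdsWithin] with t ht
  exact smul_nonneg (inv_nonneg.mpr ht.le) (sub_nonneg.mpr (h t ht))

theorem nonneg_of_forall_pos_nonneg_add_mul {a b : ℝ} (h : ∀ δ : ℝ, 0 < δ → 0 ≤ a + δ * b) :
    0 ≤ a := by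
  have hlim : Tendsto (fun δ : ℝ => a + δ * b) (𝓝[>] 0) (𝓝 a) := by
    refine ((?_ : Continuous fun δ : ℝ => a + δ * b).tendsto' 0 a (by simp)).mono_left
      nhdsWithin_le_nhds
    fun_prop
  exact ge_of_tendsto hlim (eventually_nhdsWithin_of_forall h)

namespace Polynomial

theorem aeval_ofReal_eq_eval (q : ℝ[X]) (x : ℝ) : aeval (x : ℂ) q = ((q.eval x : ℝ) : ℂ) :=
  aeval_algebraMap_apply_eq_algebraMap_eval x q

theorem wronskian_nonneg_of_im_mul_conj_nonneg (f g : ℝ[X])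
    (h : ∀ w : ℂ, 0 < w.im → 0 ≤ (aeval w f * conj (aeval w g)).im) (x : ℝ) :
    0 ≤ (derivative f).eval x * g.eval x - f.eval x * (derivative g).eval x := by
  have hline : HasDerivAt (fun ν : ℝ => (x : ℂ) + ν * Complex.I) Complex.I 0 := by
    simpa using ((hasDerivAt_id (0 : ℝ)).ofReal_comp.mul_const Complex.I).const_add (x : ℂ)
  have hf := (f.hasDerivAt_aeval _).comp 0 hline
  have hg := (g.hasDerivAt_aeval _).comp 0 hline
  have him := Complex.imCLM.hasFDerivAt.comp_hasDerivAt 0 (hf.mul hg.star)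
  refine (nonneg_of_hasDerivAt_of_le_right him fun t ht => ?_).trans_eq ?_
  · simpa [aeval_ofReal_eq_eval] using h _ (by simpa using ht)
  · simp [aeval_ofReal_eq_eval]
    ring

end Polynomial

namespace MvPolynomial

variable {σ : Type*}

theorem pderiv_monomial_of_eq_zero {R : Type*} [CommSemiring R] {v : σ →₀ ℕ} {j : σ}
    (hv : v j = 0) (c : R) : pderiv j (monomial v c) = 0 := by
  simp [pderiv_monomial, hv]

theorem derivative_aeval [Fintype σ] [DecidableEq σ] {R : Type*} [CommSemiring R]
    (φ : σ → Polynomial R) (q : MvPolynomial σ R) :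
    Polynomial.derivative (aeval φ q) =
      ∑ k, aeval φ (pderiv k q) * Polynomial.derivative (φ k) := by
  induction q using MvPolynomial.induction_on with
  | C a => simp
  | add p q hp hq => simp only [map_add, hp, hq, ← Finset.sum_add_distrib, add_mul]
  | mul_X p n ih =>
    simp only [map_mul, aeval_X, Polynomial.derivative_mul, ih, Derivation.leibniz, pderiv_X,
      smul_eq_mul, map_add, add_mul, Finset.sum_add_distrib, Finset.sum_mul]
    rw [add_comm]
    congr 1
    · simp [Pi.single_apply]
    · exact Finset.sum_congr rfl fun k _ => by ring

section Update

variable [DecidableEq σ] {R A : Type*} [CommRing R] [CommRing A] [Algebra R A]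

theorem aeval_update_monomial_of_eq_zero {v : σ →₀ ℕ} {j : σ} (hv : v j = 0) (z : σ → A) (t : A)
    (c : R) : aeval (Function.update z j t) (monomial v c) = aeval z (monomial v c) := by
  simp only [aeval_monomial]
  congr 1
  refine Finsupp.prod_congr fun k hk => ?_
  rw [Function.update_of_ne (by rintro rfl; exact Finsupp.mem_support_iff.mp hk hv)]

theorem aeval_update_monomial_of_le_one {v : σ →₀ ℕ} {j : σ} (hv : v j ≤ 1) (z : σ → A) (t : A)
    (c : R) : aeval (Function.update z j t) (monomial v c)
      = aeval z (monomial v c) + (t - z j) * aeval z (pderiv j (monomial v c)) := by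
  rcases Nat.le_one_iff_eq_zero_or_eq_one.mp hv with hv | hv
  · rw [aeval_update_monomial_of_eq_zero hv, pderiv_monomial_of_eq_zero hv, map_zero, mul_zero,
      add_zero]
  · set w := v - Finsupp.single j 1
    have hw : w j = 0 := by simp [w, hv]
    have hvw : v = w + Finsupp.single j 1 :=
      (tsub_add_cancel_of_le (Finsupp.single_le_iff.mpr hv.ge)).symm
    rw [hvw, monomial_add_single, pow_one, Derivation.leibniz, pderiv_X_self,
      pderiv_monomial_of_eq_zero hw]
    simp only [map_mul, aeval_X, aeval_update_monomial_of_eq_zero hw, Function.update_self,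
      smul_eq_mul, mul_zero, mul_one, add_zero]
    ring

theorem aeval_update_of_degreeOf_le_one {q : MvPolynomial σ R} {j : σ} (hq : q.degreeOf j ≤ 1)
    (z : σ → A) (t : A) :
    aeval (Function.update z j t) q = aeval z q + (t - z j) * aeval z (pderiv j q) := by
  conv_lhs => rw [q.as_sum]
  rw [map_sum, Finset.sum_congr rfl fun v hv =>
    aeval_update_monomial_of_le_one ((monomial_le_degreeOf j hv).trans hq) z t (coeff v q),
    Finset.sum_add_distrib, ← Finset.mul_sum]
  simp only [← map_sum, ← q.as_sum]

end Update

noncomputable def rayleighDiff (p : MvPolynomial σ ℝ) (i j : σ) (x : σ → ℝ) : ℝ :=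
  eval x (pderiv i p) * eval x (pderiv j p) - eval x p * eval x (pderiv i (pderiv j p))

variable [DecidableEq σ] {p : MvPolynomial σ ℝ}
  (hp : ∀ z : σ → ℂ, (∀ k, 0 < (z k).im) → aeval z p ≠ 0) {j : σ} (hj : p.degreeOf j ≤ 1)
include hp hj

theorem im_aeval_mul_conj_aeval_pderiv_nonneg {z : σ → ℂ} (hz : ∀ k, 0 < (z k).im) :
    0 ≤ (aeval z p * conj (aeval z (pderiv j p))).im := by
  set α := aeval z p
  set β := aeval z (pderiv j p)
  by_contra! hneg
  have hβ : β ≠ 0 := by rintro hβ; simp [hβ] at hneg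
  have hdiv : (α / β).im < 0 := by
    rw [Complex.div_im, ← sub_div, div_neg_iff]
    exact .inr ⟨by simpa [Complex.mul_im, mul_comm] using hneg, Complex.normSq_pos.mpr hβ⟩
  refine hp (Function.update z j (z j - α / β)) (fun k => ?_) ?_
  · rcases eq_or_ne k j with rfl | hk
    · simp only [Function.update_self, Complex.sub_im]
      linarith [hz k]
    · simpa [hk] using hz k
  · rw [aeval_update_of_degreeOf_le_one hj]
    field_simp
    ring

variable [Fintype σ]

theorem sum_mul_rayleighDiff_nonneg (x v : σ → ℝ) (hv : ∀ k, 0 < v k) :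
    0 ≤ ∑ k, v k * rayleighDiff p k j x := by
  set φ : σ → Polynomial ℝ := fun k => Polynomial.C (x k) + Polynomial.C (v k) * Polynomial.X
  have hline : ∀ (w : ℂ) (q : MvPolynomial σ ℝ),
      Polynomial.aeval w (aeval φ q) = aeval (fun k => (x k : ℂ) + v k * w) q := fun w q => by
    simp [comp_aeval_apply, φ]
  have heval : ∀ q : MvPolynomial σ ℝ, (aeval φ q).eval 0 = eval x q := fun q => by
    rw [← Polynomial.coe_aeval_eq_eval, comp_aeval_apply]
    simp [φ]
  have hderiv : ∀ q : MvPolynomial σ ℝ,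
      (Polynomial.derivative (aeval φ q)).eval 0 = ∑ k, v k * eval x (pderiv k q) := fun q => by
    rw [derivative_aeval, Polynomial.eval_finsetSum]
    refine Finset.sum_congr rfl fun k _ => ?_
    rw [Polynomial.eval_mul, heval, mul_comm]
    simp [φ]
  have := Polynomial.wronskian_nonneg_of_im_mul_conj_nonneg (aeval φ p) (aeval φ (pderiv j p))
    (fun w hw => by
      simpa only [hline] using im_aeval_mul_conj_aeval_pderiv_nonneg hp hj fun k => by
        simpa using mul_pos (hv k) hw) 0
  rw [hderiv, hderiv, heval, heval, Finset.sum_mul, Finset.mul_sum, ← Finset.sum_sub_distrib]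
    at this
  convert this using 2 with k
  rw [rayleighDiff]
  ring

theorem rayleighDiff_nonneg (i : σ) (x : σ → ℝ) : 0 ≤ rayleighDiff p i j x := by
  refine nonneg_of_forall_pos_nonneg_add_mul (b := ∑ k, rayleighDiff p k j x) fun δ hδ => ?_
  have := sum_mul_rayleighDiff_nonneg hp hj x (Pi.single i 1 + fun _ => δ) fun k => by
    by_cases hk : k = i <;> simp [hk, hδ, add_pos]
  simpa [add_mul, Finset.sum_add_distrib, ← Finset.mul_sum, Pi.single_apply] using this

end MvPolynomial

theorem branden_negative_correlation_general (m : ℕ) (p : MvPolynomial (Fin m) ℝ)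
    (hml : ∀ i, p.degreeOf i ≤ 1)
    (hp : p = 0 ∨ ∀ z : Fin m → ℂ, (∀ k, 0 < (z k).im) → MvPolynomial.aeval z p ≠ 0)
    (i j : Fin m) (x : Fin m → ℝ) :
    MvPolynomial.eval x (MvPolynomial.pderiv i p) *
        MvPolynomial.eval x (MvPolynomial.pderiv j p)
      ≥ MvPolynomial.eval x p *
        MvPolynomial.eval x (MvPolynomial.pderiv i (MvPolynomial.pderiv j p)) := by
  rcases hp with rfl | hp
  · simp
  exact sub_nonneg.mp (MvPolynomial.rayleighDiff_nonneg hp (hml j) i x)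

theorem branden_negative_correlation (m : ℕ) (p : MvPolynomial (Fin m) ℝ)
    (hml : ∀ i, p.degreeOf i ≤ 1)
    (hp : p = 0 ∨ ∀ z : Fin m → ℂ, (∀ k, 0 < (z k).im) → MvPolynomial.aeval z p ≠ 0)
    (i j : Fin m) (hij : i < j) (x : Fin m → ℝ) :
    MvPolynomial.eval x (MvPolynomial.pderiv i p) *
        MvPolynomial.eval x (MvPolynomial.pderiv j p)
      ≥ MvPolynomial.eval x p *
        MvPolynomial.eval x (MvPolynomial.pderiv i (MvPolynomial.pderiv j p)) :=
  branden_negative_correlation_general m p hml hp i j x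
end

section
/- Let p(y,z) be a bivariate multilinear polynomial with nonnegative real coefficients, written p(y,z) = a·y·z + b·y + c·z + d, such that p(y,−z) is real stable. Then b·c ≤ a·d. -/
theorem bistable_bc_le_ad (a b c d : ℝ)
    (ha : 0 ≤ a) (hb : 0 ≤ b) (hc : 0 ≤ c) (hd : 0 ≤ d)
    (hstable : (a = 0 ∧ b = 0 ∧ c = 0 ∧ d = 0) ∨
      ∀ y z : ℂ, 0 < y.im → 0 < z.im →
        (a : ℂ) * y * (-z) + (b : ℂ) * y + (c : ℂ) * (-z) + (d : ℂ) ≠ 0) :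
    b * c ≤ a * d := by
  by_contra h
  push_neg at h
  have had : 0 ≤ a * d := mul_nonneg ha hd
  have hbc : 0 < b * c := lt_of_le_of_lt had h
  have hb' : 0 < b := by
    rcases hb.lt_or_eq with h' | h'
    · exact h'
    · exfalso; rw [← h'] at hbc; simp at hbc
  rcases hstable with ⟨h1, h2, h3, h4⟩ | hst
  · rw [h2, h3] at hbc; simp at hbc
  · have hden : (b : ℂ) - a * Complex.I ≠ 0 := by
      intro hh
      have := congrArg Complex.re hh
      simp at this
      linarith
    set y : ℂ := ((c : ℂ) * Complex.I - d) / ((b : ℂ) - a * Complex.I) with hy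
    have him : 0 < y.im := by
      rw [hy, Complex.div_im]
      have h1 : ((b : ℂ) - a * Complex.I).re = b := by simp
      have h2 : ((b : ℂ) - a * Complex.I).im = -a := by simp
      have h3 : ((c : ℂ) * Complex.I - d).re = -d := by simp
      have h4 : ((c : ℂ) * Complex.I - d).im = c := by simp
      have h5 : Complex.normSq ((b : ℂ) - a * Complex.I) = b^2 + a^2 := by
        simp [Complex.normSq_apply]; ring
      rw [h1, h2, h3, h4, h5]
      have hsq : (0:ℝ) < b^2 + a^2 := by positivity
      rw [div_sub_div_same]
      apply div_pos (by nlinarith) hsq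
    refine hst y Complex.I him (by simp) ?_
    rw [hy]
    field_simp
    ring
end
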